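/- Singularity related to Minkowski's question-mark function (Example 2.2 (iii)): Let X = [0,1], m = 2, f_0(x) = x/(x+1) and f_1(x) = 1/(2−x). Then f_0 and f_1 are weak contractions on [0,1], the unique continuous solution G of de Rham's equation (the inverse of Minkowski's question-mark function) is continuous and strictly increasing with G(0) = 0 and G(1) = 1, the quantity α = ∫₀¹ log_2(2 + G(t) − G(t)²) dt satisfies α > 1, and G′(t) = 0 for Lebesgue-a.e. t ∈ (0,1); in particular G is a singular function. -/

import Mathlib

open MeasureTheory Filter Set Topology

/-!
On `[k/2ⁿ, (k+1)/2ⁿ]` the functional equation expresses `G` as a Möbius image of `G` itself: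
`G((k + s)/2ⁿ) = M(G s)`, where `M` is the product of the matrices `!![1, 0; 1, 1]` of `f₀` and
`!![0, 1; -1, 2]` of `f₁` along the binary digits of `k`. These have determinant `1`, so with
`(p, q)` the denominators of `M 1` and `M 0`, the increment of `G` over the interval is
`1/(p q)`, and passing to a half interval replaces `(p, q)` by `(p + q, q)` or `(p, p + q)`.
If `G` had a derivative `c ≠ 0` at `t`, the increments over the dyadic intervals containing `t`
would satisfy `2ⁿ/(pₙ qₙ) → c`; consecutive ratios would tend to `1`, which forces `pₙ/qₙ → 1`,
but one such step moves `p/q` near `2` or `1/2`. As a monotone function `G` is differentiable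
almost everywhere (Lebesgue), so `G' = 0` almost everywhere.

Strict monotonicity follows by induction on `n` with `2⁻ⁿ ≤ y - x`, since `f₀` and `f₁` are
increasing with ranges `[0, 1/2]` and `[1/2, 1]`; then `0 < G < 1` on `(0, 1)` gives
`2 + G - G² > 2` there, so `α > 1`.
-/

lemma abs_div_add_one_sub_div_add_one_lt {x y : ℝ} (hx : x ∈ Icc (0 : ℝ) 1)
    (hy : y ∈ Icc (0 : ℝ) 1) (hxy : x ≠ y) : |x / (x + 1) - y / (y + 1)| < |x - y| := by
  have hden : 1 < (x + 1) * (y + 1) := by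
    have : 0 < x + y := by
      by_contra h
      exact hxy (by linarith [hx.1, hy.1])
    nlinarith [hx.1, hy.1]
  rw [div_sub_div _ _ (by linarith [hx.1]) (by linarith [hy.1]),
    show x * (y + 1) - (x + 1) * y = x - y by ring, abs_div,
    abs_of_pos (by linarith : (0 : ℝ) < (x + 1) * (y + 1))]
  exact div_lt_self (abs_pos.2 (sub_ne_zero.2 hxy)) hden

lemma abs_one_div_two_sub_sub_one_div_two_sub_lt {x y : ℝ} (hx : x ∈ Icc (0 : ℝ) 1)
    (hy : y ∈ Icc (0 : ℝ) 1) (hxy : x ≠ y) : |1 / (2 - x) - 1 / (2 - y)| < |x - y| := by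
  have hden : 1 < (2 - x) * (2 - y) := by
    have : x + y < 2 := by
      by_contra h
      exact hxy (by linarith [hx.2, hy.2])
    nlinarith [hx.2, hy.2]
  rw [div_sub_div _ _ (by linarith [hx.2]) (by linarith [hy.2]),
    show 1 * (2 - y) - (2 - x) * 1 = x - y by ring, abs_div,
    abs_of_pos (by linarith : (0 : ℝ) < (2 - x) * (2 - y))]
  exact div_lt_self (abs_pos.2 (sub_ne_zero.2 hxy)) hden

theorem HasDerivAt.tendsto_slope_of_le_of_le {f : ℝ → ℝ} {f' x : ℝ} (hf : HasDerivAt f f' x)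
    {a b : ℕ → ℝ} (ha : Tendsto a atTop (𝓝 x)) (hb : Tendsto b atTop (𝓝 x))
    (hax : ∀ n, a n ≤ x) (hxb : ∀ n, x ≤ b n) (hab : ∀ n, a n < b n) :
    Tendsto (fun n => (f (b n) - f (a n)) / (b n - a n)) atTop (𝓝 f') := by
  set e : ℝ → ℝ := fun y => f y - f x - (y - x) • f'
  have he := hasDerivAt_iff_isLittleO.1 hf
  have hea : (fun n => e (a n)) =o[atTop] fun n => b n - a n :=
    (he.comp_tendsto ha).trans_isBigO <| Asymptotics.IsBigO.of_bound 1 <|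
      Eventually.of_forall fun n => by
        simp only [Function.comp_apply, Real.norm_eq_abs, one_mul]
        rw [abs_of_nonpos (by linarith [hax n]), abs_of_pos (by linarith [hab n])]
        linarith [hxb n]
  have heb : (fun n => e (b n)) =o[atTop] fun n => b n - a n :=
    (he.comp_tendsto hb).trans_isBigO <| Asymptotics.IsBigO.of_bound 1 <|
      Eventually.of_forall fun n => by
        simp only [Function.comp_apply, Real.norm_eq_abs, one_mul]
        rw [abs_of_nonneg (by linarith [hxb n]), abs_of_pos (by linarith [hab n])]
        linarith [hax n]
  rw [← tendsto_sub_nhds_zero_iff]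
  refine (heb.sub hea).tendsto_div_nhds_zero.congr fun n => ?_
  have : b n - a n ≠ 0 := by linarith [hab n]
  simp only [e, smul_eq_mul]
  field_simp
  ring

def SternBrocotStep (p q p' q' : ℝ) : Prop :=
  (p' = p + q ∧ q' = q) ∨ (p' = p ∧ q' = p + q)

lemma one_third_le_abs_sub_div_add_add_div {x y : ℝ} (hx : 0 < x) (hy : 0 < y) :
    1 / 3 ≤ |x - y| / (x + y) + x / (x + 2 * y) := by
  rw [div_add_div _ _ (by positivity) (by positivity), le_div_iff₀ (by positivity)]
  rcases le_total y x with hyx | hxy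
  · rw [abs_of_nonneg (by linarith)]; nlinarith [mul_pos hx hy]
  · rw [abs_of_nonpos (by linarith)]; nlinarith [mul_pos hx hy]

theorem eq_zero_of_tendsto_two_pow_div_mul {p q : ℕ → ℝ} (hp : ∀ n, 0 < p n)
    (hq : ∀ n, 0 < q n) (hstep : ∀ n, SternBrocotStep (p n) (q n) (p (n + 1)) (q (n + 1)))
    {c : ℝ} (hc : Tendsto (fun n => 2 ^ n / (p n * q n)) atTop (𝓝 c)) : c = 0 := by
  by_contra hc0
  set u : ℕ → ℝ := fun n => 2 ^ n / (p n * q n)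
  set δ : ℕ → ℝ := fun n => |p n - q n| / (p n + q n)
  have hratio : ∀ n, |u (n + 1) / u n - 1| = δ n := by
    intro n
    have := hp n; have := hq n
    rcases hstep n with ⟨hp', hq'⟩ | ⟨hp', hq'⟩
    · rw [show u (n + 1) / u n - 1 = (p n - q n) / (p n + q n) by
        simp only [u, hp', hq']; field_simp; ring]
      rw [abs_div, abs_of_pos (by positivity : 0 < p n + q n)]
    · rw [show u (n + 1) / u n - 1 = (q n - p n) / (p n + q n) by
        simp only [u, hp', hq']; field_simp; ring]
      rw [abs_div, abs_of_pos (by positivity : 0 < p n + q n), abs_sub_comm]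
  have hδ : ∀ n, 1 / 3 ≤ δ n + δ (n + 1) := by
    intro n
    rcases hstep n with ⟨hp', hq'⟩ | ⟨hp', hq'⟩
    · simp only [δ, hp', hq', add_sub_cancel_right, add_assoc, ← two_mul]
      rw [abs_of_pos (hp n)]
      exact one_third_le_abs_sub_div_add_add_div (hp n) (hq n)
    · simp only [δ, hp', hq', sub_add_cancel_left, abs_neg]
      rw [abs_of_pos (hq n), abs_sub_comm, add_comm (p n) (q n),
        show p n + (q n + p n) = q n + 2 * p n by ring]
      exact one_third_le_abs_sub_div_add_add_div (hq n) (hp n)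
  have hδlim : Tendsto δ atTop (𝓝 0) := by
    have h := ((hc.comp (tendsto_add_atTop_nat 1)).div hc hc0).sub_const 1 |>.abs
    rw [div_self hc0, sub_self, abs_zero] at h
    exact h.congr hratio
  have := ge_of_tendsto' (hδlim.add (hδlim.comp (tendsto_add_atTop_nat 1))) hδ
  norm_num at this

noncomputable def mobius (M : Matrix (Fin 2) (Fin 2) ℝ) (x : ℝ) : ℝ :=
  (M 0 0 * x + M 0 1) / (M 1 0 * x + M 1 1)

@[simp]
lemma mobius_one (x : ℝ) : mobius 1 x = x := by
  simp [mobius]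

lemma mobius_mul (M N : Matrix (Fin 2) (Fin 2) ℝ) {x : ℝ} (hx : N 1 0 * x + N 1 1 ≠ 0) :
    mobius (M * N) x = mobius M (mobius N x) := by
  simp only [mobius, Matrix.mul_apply, Fin.sum_univ_two]
  rw [← div_div_div_cancel_right₀ hx]
  congr 1 <;> field_simp <;> ring

lemma mobius_one_sub_mobius_zero (M : Matrix (Fin 2) (Fin 2) ℝ) (h₁ : M 1 0 + M 1 1 ≠ 0)
    (h₀ : M 1 1 ≠ 0) : mobius M 1 - mobius M 0 = M.det / ((M 1 0 + M 1 1) * M 1 1) := by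
  simp only [mobius, Matrix.det_fin_two, mul_one, mul_zero, zero_add]
  field_simp
  ring

/-- The Möbius matrix of `f₀ x = x / (x + 1)` for `b = 0`, of `f₁ x = 1 / (2 - x)` otherwise. -/
def minkowskiMatrix (b : ℕ) : Matrix (Fin 2) (Fin 2) ℝ :=
  if b = 0 then !![1, 0; 1, 1] else !![0, 1; -1, 2]

lemma det_minkowskiMatrix (b : ℕ) : (minkowskiMatrix b).det = 1 := by
  unfold minkowskiMatrix
  split_ifs <;> simp [Matrix.det_fin_two_of]

lemma minkowskiMatrix_denom_pos (b : ℕ) {x : ℝ} (hx : x ∈ Icc (0 : ℝ) 1) :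
    0 < minkowskiMatrix b 1 0 * x + minkowskiMatrix b 1 1 := by
  unfold minkowskiMatrix
  split_ifs <;> simp <;> linarith [hx.1, hx.2]

lemma sternBrocotStep_mul_minkowskiMatrix (M : Matrix (Fin 2) (Fin 2) ℝ) (b : ℕ) :
    SternBrocotStep (M 1 0 + M 1 1) (M 1 1)
      ((M * minkowskiMatrix b) 1 0 + (M * minkowskiMatrix b) 1 1)
      ((M * minkowskiMatrix b) 1 1) := by
  unfold SternBrocotStep minkowskiMatrix
  split_ifs
  · refine .inl ⟨?_, ?_⟩ <;> simp [Matrix.mul_apply, Fin.sum_univ_two]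
  · refine .inr ⟨?_, ?_⟩ <;> simp [Matrix.mul_apply, Fin.sum_univ_two] <;> ring

def dyadicMatrix : ℕ → ℕ → Matrix (Fin 2) (Fin 2) ℝ
  | 0, _ => 1
  | n + 1, k => dyadicMatrix n (k / 2) * minkowskiMatrix (k % 2)

lemma det_dyadicMatrix (n k : ℕ) : (dyadicMatrix n k).det = 1 := by
  induction n generalizing k with
  | zero => simp [dyadicMatrix]
  | succ n ih => simp [dyadicMatrix, Matrix.det_mul, ih, det_minkowskiMatrix]

lemma dyadicMatrix_denoms_pos (n k : ℕ) :
    0 < dyadicMatrix n k 1 0 + dyadicMatrix n k 1 1 ∧ 0 < dyadicMatrix n k 1 1 := by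
  induction n generalizing k with
  | zero => simp [dyadicMatrix]
  | succ n ih =>
    obtain ⟨hp, hq⟩ := ih (k / 2)
    rcases sternBrocotStep_mul_minkowskiMatrix (dyadicMatrix n (k / 2)) (k % 2) with
      ⟨h₁, h₀⟩ | ⟨h₁, h₀⟩ <;>
    · simp only [dyadicMatrix]
      rw [h₁, h₀]
      constructor <;> linarith

structure MinkowskiDeRhamSolution (G : ℝ → ℝ) : Prop where
  mapsTo : MapsTo G (Icc 0 1) (Icc 0 1)
  eq_left : ∀ t : ℝ, 0 ≤ t → t ≤ 1 / 2 → G t = G (2 * t) / (G (2 * t) + 1)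
  eq_right : ∀ t : ℝ, 1 / 2 ≤ t → t ≤ 1 → G t = 1 / (2 - G (2 * t - 1))
  map_zero : G 0 = 0
  map_one : G 1 = 1

namespace MinkowskiDeRhamSolution

variable {G : ℝ → ℝ}

lemma apply_pos (hG : MinkowskiDeRhamSolution G) {s : ℝ} (hs : s ∈ Ioc (0 : ℝ) 1) :
    0 < G s := by
  have right : ∀ s : ℝ, 1 / 2 ≤ s → s ≤ 1 → 0 < G s := fun s h₁ h₂ => by
    have := hG.mapsTo (show 2 * s - 1 ∈ Icc (0 : ℝ) 1 from ⟨by linarith, by linarith⟩)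
    rw [hG.eq_right s h₁ h₂]
    exact one_div_pos.2 (by linarith [this.2])
  suffices ∀ n : ℕ, ∀ s : ℝ, 1 ≤ 2 ^ n * s → s ≤ 1 → 0 < G s by
    obtain ⟨n, hn⟩ := pow_unbounded_of_one_lt s⁻¹ one_lt_two
    rw [inv_lt_iff_one_lt_mul₀ hs.1] at hn
    exact this n s (by linarith) hs.2
  intro n
  induction n with
  | zero => intro s h₁ h₂; exact right s (by linarith) h₂
  | succ n ih =>
    intro s h₁ h₂
    rcases le_or_gt (1 / 2) s with hs | hs
    · exact right s hs h₂
    · rw [pow_succ] at h₁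
      rw [hG.eq_left s (by nlinarith [pow_pos (two_pos (α := ℝ)) n]) hs.le]
      have := ih (2 * s) (by linarith) (by linarith)
      positivity

lemma strictMonoOn (hG : MinkowskiDeRhamSolution G) : StrictMonoOn G (Icc 0 1) := by
  suffices key : ∀ n : ℕ, ∀ x ∈ Icc (0 : ℝ) 1, ∀ y ∈ Icc (0 : ℝ) 1,
      1 ≤ 2 ^ n * (y - x) → G x < G y by
    intro x hx y hy hxy
    obtain ⟨n, hn⟩ := pow_unbounded_of_one_lt (y - x)⁻¹ one_lt_two
    rw [inv_lt_iff_one_lt_mul₀ (sub_pos.2 hxy)] at hn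
    exact key n x hx y hy (by linarith)
  intro n
  induction n with
  | zero =>
    intro x hx y hy h
    obtain rfl : x = 0 := by linarith [hx.1, hy.2]
    obtain rfl : y = 1 := by linarith [hy.2]
    simp [hG.map_zero, hG.map_one]
  | succ n ih =>
    intro x ⟨hx₀, hx₁⟩ y ⟨hy₀, hy₁⟩ h
    rw [pow_succ] at h
    have hxy : x < y := by
      by_contra! hyx
      nlinarith [pow_pos (two_pos (α := ℝ)) n]
    rcases le_or_gt y (1 / 2) with hy₂ | hy₂
    · have h₂ := ih (2 * x) ⟨by linarith, by linarith⟩ (2 * y) ⟨by linarith, by linarith⟩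
        (by linarith)
      have hGx := (hG.mapsTo (show 2 * x ∈ Icc (0 : ℝ) 1 from ⟨by linarith, by linarith⟩)).1
      rw [hG.eq_left x hx₀ (by linarith), hG.eq_left y (by linarith) hy₂,
        div_lt_div_iff₀ (by linarith) (by linarith)]
      nlinarith
    rcases le_or_gt (1 / 2) x with hx₂ | hx₂
    · have h₂ := ih (2 * x - 1) ⟨by linarith, by linarith⟩ (2 * y - 1)
        ⟨by linarith, by linarith⟩ (by linarith)
      have hGy := (hG.mapsTo (show 2 * y - 1 ∈ Icc (0 : ℝ) 1 from ⟨by linarith, by linarith⟩)).2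
      rw [hG.eq_right x hx₂ (by linarith), hG.eq_right y (by linarith) hy₁]
      exact one_div_lt_one_div_of_lt (by linarith) (by linarith)
    have hGx := hG.mapsTo (show 2 * x ∈ Icc (0 : ℝ) 1 from ⟨by linarith, by linarith⟩)
    have hGy := hG.mapsTo (show 2 * y - 1 ∈ Icc (0 : ℝ) 1 from ⟨by linarith, by linarith⟩)
    have hGy₀ := hG.apply_pos (show 2 * y - 1 ∈ Ioc (0 : ℝ) 1 from ⟨by linarith, by linarith⟩)
    calc G x = G (2 * x) / (G (2 * x) + 1) := hG.eq_left x hx₀ hx₂.le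
      _ ≤ 1 / 2 := by rw [div_le_iff₀ (by linarith [hGx.1])]; linarith [hGx.2]
      _ < 1 / (2 - G (2 * y - 1)) := one_div_lt_one_div_of_lt (by linarith [hGy.2]) (by linarith)
      _ = G y := (hG.eq_right y hy₂.le hy₁).symm

lemma apply_add_div_two (hG : MinkowskiDeRhamSolution G) {b : ℕ} (hb : b < 2) {s : ℝ}
    (hs : s ∈ Icc (0 : ℝ) 1) : G ((b + s) / 2) = mobius (minkowskiMatrix b) (G s) := by
  interval_cases b
  · have := hG.eq_left (s / 2) (by linarith [hs.1]) (by linarith [hs.2])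
    rw [mul_div_cancel₀ s two_ne_zero] at this
    simpa [mobius, minkowskiMatrix] using this
  · have := hG.eq_right ((1 + s) / 2) (by linarith [hs.1]) (by linarith [hs.2])
    rw [show 2 * ((1 + s) / 2) - 1 = s by ring] at this
    simp [mobius, minkowskiMatrix, this]
    ring_nf

lemma apply_dyadic (hG : MinkowskiDeRhamSolution G) {n k : ℕ} (hk : k < 2 ^ n) {s : ℝ}
    (hs : s ∈ Icc (0 : ℝ) 1) : G ((k + s) / 2 ^ n) = mobius (dyadicMatrix n k) (G s) := by
  induction n generalizing k s with
  | zero =>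
    obtain rfl : k = 0 := by simpa using hk
    simp [dyadicMatrix]
  | succ n ih =>
    have hk₂ : k / 2 < 2 ^ n := Nat.div_lt_of_lt_mul (by rwa [pow_succ, mul_comm] at hk)
    have hs' : ((k % 2 : ℕ) + s) / 2 ∈ Icc (0 : ℝ) 1 := by
      have : ((k % 2 : ℕ) : ℝ) ≤ 1 := by exact_mod_cast Nat.le_of_lt_succ (Nat.mod_lt k two_pos)
      constructor <;> linarith [hs.1, hs.2, (Nat.cast_nonneg (k % 2) : (0 : ℝ) ≤ _)]
    have hsplit :
        ((k : ℝ) + s) / 2 ^ (n + 1) = ((k / 2 : ℕ) + ((k % 2 : ℕ) + s) / 2) / 2 ^ n := by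
      have hk : (k : ℝ) = 2 * (k / 2 : ℕ) + (k % 2 : ℕ) := by
        exact_mod_cast (Nat.div_add_mod k 2).symm
      rw [hk, pow_succ]
      field_simp
      ring
    rw [hsplit, ih hk₂ hs', hG.apply_add_div_two (Nat.mod_lt k two_pos) hs, dyadicMatrix,
      mobius_mul _ _ (minkowskiMatrix_denom_pos _ (hG.mapsTo hs)).ne']

lemma apply_dyadic_succ_sub (hG : MinkowskiDeRhamSolution G) {n k : ℕ} (hk : k < 2 ^ n) :
    G ((k + 1) / 2 ^ n) - G (k / 2 ^ n) =
      1 / ((dyadicMatrix n k 1 0 + dyadicMatrix n k 1 1) * dyadicMatrix n k 1 1) := by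
  obtain ⟨hp, hq⟩ := dyadicMatrix_denoms_pos n k
  have h₀ := hG.apply_dyadic hk (s := 0) ⟨le_rfl, zero_le_one⟩
  rw [add_zero] at h₀
  rw [hG.apply_dyadic hk ⟨zero_le_one, le_rfl⟩, h₀, hG.map_one, hG.map_zero,
    mobius_one_sub_mobius_zero _ hp.ne' hq.ne', det_dyadicMatrix]

lemma eq_zero_of_hasDerivAt (hG : MinkowskiDeRhamSolution G) {t c : ℝ} (ht : t ∈ Ico (0 : ℝ) 1)
    (hc : HasDerivAt G c t) : c = 0 := by
  set k : ℕ → ℕ := fun n => ⌊t * 2 ^ n⌋₊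
  set M : ℕ → Matrix (Fin 2) (Fin 2) ℝ := fun n => dyadicMatrix n (k n)
  have hk : ∀ n, k n < 2 ^ n := fun n => by
    refine (Nat.floor_lt (by positivity [ht.1])).2 ?_
    push_cast
    nlinarith [pow_pos (two_pos (α := ℝ)) n, ht.2]
  have hM : ∀ n, M (n + 1) = M n * minkowskiMatrix (k (n + 1) % 2) := fun n => by
    have : k (n + 1) / 2 = k n := by
      rw [← Nat.floor_div_natCast, Nat.cast_ofNat, pow_succ, ← mul_assoc,
        mul_div_cancel_right₀ _ two_ne_zero]
    simp only [M, dyadicMatrix, this]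
  have hdist : ∀ n, (k n : ℝ) / 2 ^ n ≤ t ∧ t < (k n + 1) / 2 ^ n := fun n => by
    rw [div_le_iff₀ (by positivity), lt_div_iff₀ (by positivity)]
    exact ⟨Nat.floor_le (by positivity [ht.1]), Nat.lt_floor_add_one _⟩
  have h2 := tendsto_pow_atTop_atTop_of_one_lt (one_lt_two (α := ℝ))
  have ha : Tendsto (fun n => (k n : ℝ) / 2 ^ n) atTop (𝓝 t) :=
    (tendsto_nat_floor_mul_div_atTop ht.1).comp h2
  have hb : Tendsto (fun n => ((k n : ℝ) + 1) / 2 ^ n) atTop (𝓝 t) := by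
    simpa [add_div] using ha.add (tendsto_inv_atTop_zero.comp h2)
  refine eq_zero_of_tendsto_two_pow_div_mul (p := fun n => M n 1 0 + M n 1 1)
    (q := fun n => M n 1 1) (fun n => (dyadicMatrix_denoms_pos n (k n)).1)
    (fun n => (dyadicMatrix_denoms_pos n (k n)).2)
    (fun n => by simpa only [hM] using sternBrocotStep_mul_minkowskiMatrix (M n) _) ?_
  refine (hc.tendsto_slope_of_le_of_le ha hb (fun n => (hdist n).1) (fun n => (hdist n).2.le)
    fun n => div_lt_div_of_pos_right (lt_add_one _) (by positivity)).congr fun n => ?_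
  rw [hG.apply_dyadic_succ_sub (hk n)]
  field_simp
  ring

lemma ae_hasDerivWithinAt_zero (hG : MinkowskiDeRhamSolution G) :
    ∀ᵐ t ∂(volume.restrict (Ioo (0 : ℝ) 1)), HasDerivWithinAt G 0 (Icc 0 1) t := by
  have hdiff := hG.strictMonoOn.monotoneOn.ae_differentiableWithinAt measurableSet_Icc
  filter_upwards [ae_restrict_of_ae_restrict_of_subset Ioo_subset_Icc_self hdiff,
    ae_restrict_mem measurableSet_Ioo] with t hdt ht
  have hd := (hdt.differentiableAt (Icc_mem_nhds ht.1 ht.2)).hasDerivAt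
  rw [← hG.eq_zero_of_hasDerivAt ⟨ht.1.le, ht.2⟩ hd]
  exact hd.hasDerivWithinAt

lemma one_lt_integral_logb (hG : MinkowskiDeRhamSolution G) (hc : ContinuousOn G (Icc 0 1)) :
    1 < ∫ t in Ico (0 : ℝ) 1, Real.logb 2 (2 + G t - G t ^ 2) := by
  have harg : ∀ t ∈ Icc (0 : ℝ) 1, 2 ≤ 2 + G t - G t ^ 2 := fun t ht => by
    have := hG.mapsTo ht
    nlinarith [this.1, this.2]
  have hint : IntervalIntegrable (fun t => Real.logb 2 (2 + G t - G t ^ 2)) volume 0 1 := by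
    refine ContinuousOn.intervalIntegrable ?_
    rw [uIcc_of_le zero_le_one]
    have : ContinuousOn (fun t => 2 + G t - G t ^ 2) (Icc 0 1) :=
      (continuousOn_const.add hc).sub (hc.pow 2)
    exact this.logb fun t ht => by linarith [harg t ht]
  have hpos : 0 < ∫ t in (0 : ℝ)..1, (Real.logb 2 (2 + G t - G t ^ 2) - 1) := by
    refine intervalIntegral.intervalIntegral_pos_of_pos_on (hint.sub intervalIntegrable_const)
      (fun t ht => ?_) zero_lt_one
    have h₀ := hG.strictMonoOn ⟨le_rfl, zero_le_one⟩ (Ioo_subset_Icc_self ht) ht.1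
    have h₁ := hG.strictMonoOn (Ioo_subset_Icc_self ht) ⟨zero_le_one, le_rfl⟩ ht.2
    rw [hG.map_zero] at h₀
    rw [hG.map_one] at h₁
    rw [sub_pos, ← Real.logb_self_eq_one one_lt_two]
    exact Real.logb_lt_logb one_lt_two two_pos (by nlinarith)
  rw [intervalIntegral.integral_sub hint intervalIntegrable_const] at hpos
  rw [integral_Ico_eq_integral_Ioo, ← integral_Ioc_eq_integral_Ioo,
    ← intervalIntegral.integral_of_le zero_le_one]
  simpa using hpos

end MinkowskiDeRhamSolution

theorem minkowski_inverse_singular (G : ℝ → ℝ)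
    (hGc : ContinuousOn G (Set.Icc 0 1))
    (hGX : Set.MapsTo G (Set.Icc 0 1) (Set.Icc 0 1))
    (hGeq0 : ∀ t : ℝ, 0 ≤ t → t ≤ 1 / 2 → G t = G (2 * t) / (G (2 * t) + 1))
    (hGeq1 : ∀ t : ℝ, 1 / 2 ≤ t → t ≤ 1 → G t = 1 / (2 - G (2 * t - 1)))
    (hG0 : G 0 = 0) (hG1 : G 1 = 1) :
    (∀ x ∈ Set.Icc (0 : ℝ) 1, ∀ y ∈ Set.Icc (0 : ℝ) 1, x ≠ y →
      |x / (x + 1) - y / (y + 1)| < |x - y|) ∧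
    (∀ x ∈ Set.Icc (0 : ℝ) 1, ∀ y ∈ Set.Icc (0 : ℝ) 1, x ≠ y →
      |1 / (2 - x) - 1 / (2 - y)| < |x - y|) ∧
    StrictMonoOn G (Set.Icc (0 : ℝ) 1) ∧
    1 < ∫ t in Set.Ico (0 : ℝ) 1, Real.logb 2 (2 + G t - (G t) ^ 2) ∧
    ∀ᵐ t ∂(volume.restrict (Set.Ioo (0 : ℝ) 1)),
      HasDerivWithinAt G 0 (Set.Icc (0 : ℝ) 1) t := by
  have hG : MinkowskiDeRhamSolution G := ⟨hGX, hGeq0, hGeq1, hG0, hG1⟩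
  exact ⟨fun x hx y hy => abs_div_add_one_sub_div_add_one_lt hx hy,
    fun x hx y hy => abs_one_div_two_sub_sub_one_div_two_sub_lt hx hy,
    hG.strictMonoOn, hG.one_lt_integral_logb hGc, hG.ae_hasDerivWithinAt_zero⟩
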